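/- arXiv:1802.08437 — 2 statements merged into one kernel-verified Lean document; each statement's English description precedes it below -/
import Mathlib

section
/- Every reduced ground TRS is canonical (complete, left- and right-reduced) and has random descent. -/
namespace KB

-- Generic ARS notions
def NF {α : Type _} (r : α → α → Prop) (a : α) : Prop := ∀ b, ¬ r a b

def SymmCl {α : Type _} (r : α → α → Prop) (a b : α) : Prop := r a b ∨ r b a

def Conv {α : Type _} (r : α → α → Prop) : α → α → Prop :=
  Relation.ReflTransGen (SymmCl r)

def Joinable {α : Type _} (r : α → α → Prop) (a b : α) : Prop :=
  ∃ c, Relation.ReflTransGen r a c ∧ Relation.ReflTransGen r b c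

def Confluent {α : Type _} (r : α → α → Prop) : Prop :=
  ∀ a b c, Relation.ReflTransGen r a b → Relation.ReflTransGen r a c → Joinable r b c

def Terminating {α : Type _} (r : α → α → Prop) : Prop :=
  WellFounded (fun a b => r b a)

def Complete {α : Type _} (r : α → α → Prop) : Prop := Terminating r ∧ Confluent r

def NormTo {α : Type _} (r : α → α → Prop) (a b : α) : Prop :=
  Relation.ReflTransGen r a b ∧ NF r b

-- First-order terms
inductive Term (F V : Type) : Type where
  | var : V → Term F V
  | app : F → List (Term F V) → Term F V

variable {F V : Type}

def Term.subst (σ : V → Term F V) : Term F V → Term F V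
  | .var x => σ x
  | .app f ts => .app f (ts.attach.map fun t => Term.subst σ t.1)
decreasing_by
  simp only [Term.app.sizeOf_spec]
  have := List.sizeOf_lt_of_mem t.2
  omega

def Term.rename (π : V → V) (t : Term F V) : Term F V :=
  t.subst (fun x => Term.var (π x))

inductive Ctx (F V : Type) : Type where
  | hole : Ctx F V
  | cons : F → List (Term F V) → Ctx F V → List (Term F V) → Ctx F V

def Ctx.fill : Ctx F V → Term F V → Term F V
  | .hole, t => t
  | .cons f l C r, t => Term.app f (l ++ C.fill t :: r)

abbrev TRS (F V : Type) := Set (Term F V × Term F V)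

def Step (R : TRS F V) (s t : Term F V) : Prop :=
  ∃ (C : Ctx F V) (σ : V → Term F V) (l r : Term F V),
    (l, r) ∈ R ∧ s = C.fill (l.subst σ) ∧ t = C.fill (r.subst σ)

inductive InVars (x : V) : Term F V → Prop where
  | var : InVars x (Term.var x)
  | app {f : F} {ts : List (Term F V)} {t : Term F V} :
      t ∈ ts → InVars x t → InVars x (Term.app f ts)

def WellFormedRule (l r : Term F V) : Prop :=
  (∀ x : V, l ≠ Term.var x) ∧ ∀ x, InVars x r → InVars x l

def IsTRS (R : TRS F V) : Prop := ∀ p ∈ R, WellFormedRule p.1 p.2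

inductive Ground : Term F V → Prop where
  | app {f : F} {ts : List (Term F V)} : (∀ t ∈ ts, Ground t) → Ground (Term.app f ts)

def GroundSys (R : TRS F V) : Prop := ∀ p ∈ R, Ground p.1 ∧ Ground p.2

def LeftReduced (R : TRS F V) : Prop := ∀ p ∈ R, NF (Step (R \ {p})) p.1
def RightReduced (R : TRS F V) : Prop := ∀ p ∈ R, NF (Step R) p.2
def Reduced (R : TRS F V) : Prop := LeftReduced R ∧ RightReduced R

def RuleVariant (p q : Term F V × Term F V) : Prop :=
  ∃ π : V → V, Function.Bijective π ∧ p.1 = q.1.rename π ∧ p.2 = q.2.rename π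

def LitSim (R S : TRS F V) : Prop :=
  (∀ p ∈ R, ∃ q ∈ S, RuleVariant p q) ∧ (∀ q ∈ S, ∃ p ∈ R, RuleVariant q p)

def Encompass (s t : Term F V) : Prop :=
  ∃ (C : Ctx F V) (σ : V → Term F V), s = C.fill (t.subst σ)

def PEncompass (s t : Term F V) : Prop := Encompass s t ∧ ¬ Encompass t s

def ReductionOrder (gt : Term F V → Term F V → Prop) : Prop :=
  Transitive gt ∧ WellFounded (fun a b => gt b a) ∧
  (∀ (C : Ctx F V) s t, gt s t → gt (C.fill s) (C.fill t)) ∧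
  (∀ (σ : V → Term F V) s t, gt s t → gt (s.subst σ) (t.subst σ))

-- positions
def subt : List ℕ → Term F V → Option (Term F V)
  | [], t => some t
  | _ :: _, Term.var _ => none
  | i :: p, Term.app _ ts => (ts[i]?).bind (subt p)

def repl : List ℕ → Term F V → Term F V → Option (Term F V)
  | [], _, u => some u
  | _ :: _, Term.var _, _ => none
  | i :: p, Term.app f ts, u =>
      (ts[i]?).bind fun w => (repl p w u).map fun w' => Term.app f (ts.set i w')

def FunPos (p : List ℕ) (t : Term F V) : Prop :=
  ∃ f ts, subt p t = some (Term.app f ts)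

def Unifier (σ : V → Term F V) (s t : Term F V) : Prop := s.subst σ = t.subst σ

def IsMGU (σ : V → Term F V) (s t : Term F V) : Prop :=
  Unifier σ s t ∧ ∀ τ, Unifier τ s t → ∃ ρ, ∀ x, (σ x).subst ρ = τ x

def VarsDisjoint (p q : Term F V × Term F V) : Prop :=
  ∀ x, ¬ ((InVars x p.1 ∨ InVars x p.2) ∧ (InVars x q.1 ∨ InVars x q.2))

def Overlap (R : TRS F V) (l1 r1 : Term F V) (p : List ℕ) (l2 r2 : Term F V) : Prop :=
  (∃ q ∈ R, RuleVariant (l1, r1) q) ∧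
  (∃ q ∈ R, RuleVariant (l2, r2) q) ∧
  VarsDisjoint (l1, r1) (l2, r2) ∧
  FunPos p l2 ∧
  (∃ w, subt p l2 = some w ∧ ∃ σ, Unifier σ l1 w) ∧
  (p = [] → ¬ RuleVariant (l1, r1) (l2, r2))

def CPeak (R : TRS F V) (t : Term F V) (p : List ℕ) (s u : Term F V) : Prop :=
  ∃ (l1 r1 l2 r2 : Term F V) (σ : V → Term F V) (w : Term F V),
    Overlap R l1 r1 p l2 r2 ∧ subt p l2 = some w ∧ IsMGU σ l1 w ∧
    s = l2.subst σ ∧ u = r2.subst σ ∧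
    repl p (l2.subst σ) (r1.subst σ) = some t

def PrimeCPeak (R : TRS F V) (t : Term F V) (p : List ℕ) (s u : Term F V) : Prop :=
  CPeak R t p s u ∧
  ∀ w v, subt p s = some w → (∃ q, q ≠ [] ∧ subt q w = some v) → NF (Step R) v

def PCP (R : TRS F V) : Set (Term F V × Term F V) :=
  { e | ∃ p s, PrimeCPeak R e.1 p s e.2 }

def Nabla (R : TRS F V) (s u w : Term F V) : Prop :=
  Relation.TransGen (Step R) s u ∧ Relation.TransGen (Step R) s w ∧
  (Joinable (Step R) u w ∨ SymmCl (Step (PCP R)) u w)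

-- counted conversions and rewrite sequences
inductive ConvN {α : Type _} (r : α → α → Prop) : ℕ → ℕ → α → α → Prop where
  | refl (a : α) : ConvN r 0 0 a a
  | fwd {l n : ℕ} {a b c : α} : r a b → ConvN r l n b c → ConvN r l (n + 1) a c
  | bwd {l n : ℕ} {a b c : α} : r b a → ConvN r l n b c → ConvN r (l + 1) n a c

inductive StepsN {α : Type _} (r : α → α → Prop) : ℕ → α → α → Prop where
  | refl (a : α) : StepsN r 0 a a
  | step {n : ℕ} {a b c : α} : r a b → StepsN r n b c → StepsN r (n + 1) a c

def RandomDescent {α : Type _} (r : α → α → Prop) : Prop :=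
  ∀ l m a b, ConvN r l m a b → NF r b → ∃ n, StepsN r n a b ∧ n + l = m



section Aux
variable {α : Type _} {r : α → α → Prop}

def DD (r : α → α → Prop) : Prop :=
  ∀ a b c, r a b → r a c → b = c ∨ ∃ d, r b d ∧ r c d

theorem dd_strip (h : DD r) {a c : α} (hac : Relation.ReflTransGen r a c) :
    ∀ b, r a b → ∃ d, Relation.ReflTransGen r b d ∧ (c = d ∨ r c d) := by
  induction hac using Relation.ReflTransGen.head_induction_on with
  | refl => exact fun b hb => ⟨b, .refl, Or.inr hb⟩
  | head hstep _ ih =>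
    rename_i a a' hac
    intro b hb
    rcases h a a' b hstep hb with rfl | ⟨e, he1, he2⟩
    · exact ⟨_, hac, Or.inl rfl⟩
    · rcases ih e he1 with ⟨d, hd1, hd2⟩
      exact ⟨d, .head he2 hd1, hd2⟩

theorem dd_semi (h : DD r) {a b c : α} (hab : r a b) (hac : Relation.ReflTransGen r a c) :
    Joinable r b c := by
  rcases dd_strip h hac b hab with ⟨d, hd1, hd2⟩
  rcases hd2 with rfl | hcd
  · exact ⟨_, hd1, .refl⟩
  · exact ⟨d, hd1, .single hcd⟩

theorem dd_confluent (h : DD r) : Confluent r := by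
  intro a b c hab
  induction hab using Relation.ReflTransGen.head_induction_on generalizing c with
  | refl => exact fun hac => ⟨c, hac, .refl⟩
  | head hstep _ ih =>
    intro hac
    rcases dd_semi h hstep hac with ⟨d, h1, h2⟩
    rcases ih d h1 with ⟨e, he1, he2⟩
    exact ⟨e, he1, h2.trans he2⟩

theorem dd_key (h : DD r) {n : ℕ} {a x : α} (hs : StepsN r n a x) (hx : NF r x) :
    ∀ b, r a b → ∃ m, n = m + 1 ∧ StepsN r m b x := by
  induction hs with
  | refl a => exact fun b hb => absurd hb (hx b)
  | step ha hs ih =>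
    rename_i n a a' x
    intro b hb
    rcases h a a' b ha hb with rfl | ⟨d, h1, h2⟩
    · exact ⟨n, rfl, hs⟩
    · rcases ih hx d h1 with ⟨m, rfl, hm⟩
      exact ⟨m + 1, rfl, .step h2 hm⟩

theorem dd_rd (h : DD r) : RandomDescent r := by
  intro l m a b hconv
  induction hconv with
  | refl a => exact fun _ => ⟨0, .refl a, rfl⟩
  | fwd hstep _ ih =>
    intro hb
    rcases ih hb with ⟨k, hk, hkeq⟩
    exact ⟨k + 1, .step hstep hk, by omega⟩
  | bwd hstep _ ih =>
    intro hb
    rcases ih hb with ⟨k, hk, hkeq⟩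
    rcases dd_key h hk hb _ hstep with ⟨m, rfl, hm⟩
    exact ⟨m, hm, by omega⟩


variable {F V : Type}

theorem ground_subst {t : Term F V} (h : Ground t) (σ : V → Term F V) :
    t.subst σ = t := by
  induction h with
  | app hts ih =>
    rename_i f ts
    rw [Term.subst]
    congr 1
    calc ts.attach.map (fun t => Term.subst σ t.1)
        = ts.attach.map (fun t => t.1) := by
          apply List.map_congr_left
          intro a _
          exact ih a.1 a.2
      _ = ts := List.attach_map_subtype_val ts

inductive LStep {α : Type _} (r : α → α → Prop) : List α → List α → Prop where
  | head {a b : α} {l : List α} : r a b → LStep r (a :: l) (b :: l)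
  | tail {a : α} {l l' : List α} : LStep r l l' → LStep r (a :: l) (a :: l')

theorem lstep_append {α : Type _} {r : α → α → Prop} {a b : α} (h : r a b) :
    ∀ (L R : List α), LStep r (L ++ a :: R) (L ++ b :: R) := by
  intro L R
  induction L with
  | nil => exact .head h
  | cons x L ih => exact .tail ih

theorem acc_cons {α : Type _} {r : α → α → Prop} {a : α} (ha : Acc (flip r) a) :
    ∀ l, Acc (flip (LStep r)) l → Acc (flip (LStep r)) (a :: l) := by
  induction ha with
  | intro a _ iha =>
    intro l hl
    induction hl with
    | intro l hl ihl =>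
      constructor
      rintro y hy
      cases hy with
      | head hr => exact iha _ hr _ (Acc.intro l hl)
      | tail h => exact ihl _ h

theorem acc_list {α : Type _} {r : α → α → Prop} :
    ∀ l : List α, (∀ x ∈ l, Acc (flip r) x) → Acc (flip (LStep r)) l := by
  intro l
  induction l with
  | nil => exact fun _ => Acc.intro _ (fun y hy => by cases hy)
  | cons a l ih =>
    intro h
    exact acc_cons (h a (by simp)) l (ih fun x hx => h x (by simp [hx]))

theorem append_cons_eq {α : Type _} :
    ∀ (L1 : List α) (a : α) (R1 L2 : List α) (b : α) (R2 : List α),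
      L1 ++ a :: R1 = L2 ++ b :: R2 →
      (L1 = L2 ∧ a = b ∧ R1 = R2) ∨
      (∃ M, L2 = L1 ++ a :: M ∧ R1 = M ++ b :: R2) ∨
      (∃ M, L1 = L2 ++ b :: M ∧ R2 = M ++ a :: R1) := by
  intro L1
  induction L1 with
  | nil =>
    intro a R1 L2 b R2 h
    cases L2 with
    | nil => simp_all
    | cons c L2' =>
      simp only [List.nil_append, List.cons_append, List.cons.injEq] at h
      exact Or.inr (Or.inl ⟨L2', by simp [h.1, h.2]⟩)
  | cons c L1' ih =>
    intro a R1 L2 b R2 h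
    cases L2 with
    | nil =>
      simp only [List.cons_append, List.nil_append, List.cons.injEq] at h
      exact Or.inr (Or.inr ⟨L1', by simp [h.1, h.2]⟩)
    | cons d L2' =>
      simp only [List.cons_append, List.cons.injEq] at h
      obtain ⟨rfl, h2⟩ := h
      rcases ih a R1 L2' b R2 h2 with ⟨rfl, rfl, rfl⟩ | ⟨M, hM1, hM2⟩ | ⟨M, hM1, hM2⟩
      · exact Or.inl ⟨rfl, rfl, rfl⟩
      · exact Or.inr (Or.inl ⟨M, by simp [hM1, hM2]⟩)
      · exact Or.inr (Or.inr ⟨M, by simp [hM1, hM2]⟩)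

theorem fill_sizeOf : ∀ (C : Ctx F V) (t : Term F V), sizeOf t ≤ sizeOf (C.fill t) := by
  intro C
  induction C with
  | hole => intro t; simp [Ctx.fill]
  | cons f L C R ih =>
    intro t
    have h1 := ih t
    have h2 : sizeOf (C.fill t) < sizeOf (L ++ C.fill t :: R) :=
      List.sizeOf_lt_of_mem (by simp)
    simp only [Ctx.fill, Term.app.sizeOf_spec]
    omega

theorem fill_ne_of_cons {f : F} {L R : List (Term F V)} {C : Ctx F V} (t : Term F V) :
    (Ctx.cons f L C R).fill t ≠ t := by
  intro h
  have h1 := fill_sizeOf C t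
  have h2 : sizeOf (C.fill t) < sizeOf (L ++ C.fill t :: R) :=
    List.sizeOf_lt_of_mem (by simp)
  have := congrArg sizeOf h
  simp only [Ctx.fill, Term.app.sizeOf_spec] at this
  omega

theorem fill_eq_cases :
    ∀ (C1 C2 : Ctx F V) (t1 t2 : Term F V), C1.fill t1 = C2.fill t2 →
      (C1 = C2 ∧ t1 = t2) ∨
      (∃ D : Ctx F V, D ≠ .hole ∧ t1 = D.fill t2) ∨
      (∃ D : Ctx F V, D ≠ .hole ∧ t2 = D.fill t1) ∨
      (∀ u1 u2 : Term F V, ∃ D1 D2 : Ctx F V,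
        C1.fill u1 = D2.fill t2 ∧ C2.fill u2 = D1.fill t1 ∧ D2.fill u2 = D1.fill u1) := by
  intro C1
  induction C1 with
  | hole =>
    intro C2 t1 t2 h
    cases C2 with
    | hole => exact Or.inl ⟨rfl, h⟩
    | cons f L C R => exact Or.inr (Or.inl ⟨.cons f L C R, by simp, h⟩)
  | cons f L C R ih =>
    intro C2 t1 t2 h
    cases C2 with
    | hole => exact Or.inr (Or.inr (Or.inl ⟨.cons f L C R, by simp, h.symm⟩))
    | cons f' L' C' R' =>
      simp only [Ctx.fill, Term.app.injEq] at h
      obtain ⟨rfl, hlist⟩ := h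
      rcases append_cons_eq L (C.fill t1) R L' (C'.fill t2) R' hlist with
        ⟨rfl, heq, rfl⟩ | ⟨M, hM1, hM2⟩ | ⟨M, hM1, hM2⟩
      · rcases ih C' t1 t2 heq with ⟨rfl, rfl⟩ | h2 | h3 | h4
        · exact Or.inl ⟨rfl, rfl⟩
        · exact Or.inr (Or.inl h2)
        · exact Or.inr (Or.inr (Or.inl h3))
        · refine Or.inr (Or.inr (Or.inr fun u1 u2 => ?_))
          obtain ⟨D1, D2, h1, h2, h3⟩ := h4 u1 u2
          exact ⟨.cons f L D1 R, .cons f L D2 R, by simp [Ctx.fill, h1, h2, h3]⟩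
      · -- L' = L ++ C.fill t1 :: M, R = M ++ C'.fill t2 :: R'
        refine Or.inr (Or.inr (Or.inr fun u1 u2 => ?_))
        refine ⟨.cons f L C (M ++ C'.fill u2 :: R'), .cons f (L ++ C.fill u1 :: M) C' R', ?_, ?_, ?_⟩
        · simp [Ctx.fill, hM2]
        · simp [Ctx.fill, hM1]
        · simp [Ctx.fill]
      · -- L = L' ++ C'.fill t2 :: M, R' = M ++ C.fill t1 :: R
        refine Or.inr (Or.inr (Or.inr fun u1 u2 => ?_))
        refine ⟨.cons f (L' ++ C'.fill u2 :: M) C R, .cons f L' C' (M ++ C.fill u1 :: R), ?_, ?_, ?_⟩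
        · simp [Ctx.fill, hM1]
        · simp [Ctx.fill, hM2]
        · simp [Ctx.fill]

theorem step_dd {R : TRS F V} (hG : GroundSys R) (hRed : Reduced R) : DD (Step R) := by
  rintro s u w ⟨C1, σ1, l1, r1, h1, rfl, rfl⟩ ⟨C2, σ2, l2, r2, h2, heq, rfl⟩
  have g1l : Ground l1 := (hG _ h1).1
  have g1r : Ground r1 := (hG _ h1).2
  have g2l : Ground l2 := (hG _ h2).1
  have g2r : Ground r2 := (hG _ h2).2
  rw [ground_subst g1l, ground_subst g2l] at heq
  rw [ground_subst g1r]
  rw [ground_subst g2r]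
  rcases fill_eq_cases C1 C2 l1 l2 heq with ⟨rfl, rfl⟩ | ⟨D, hD, hfill⟩ | ⟨D, hD, hfill⟩ | h4
  · by_cases hrr : r1 = r2
    · subst hrr
      exact Or.inl rfl
    · exfalso
      apply hRed.1 (l1, r1) h1 r2
      have hne : (l1, r2) ∉ ({(l1, r1)} : Set (Term F V × Term F V)) := by
        intro hm
        exact hrr (congrArg Prod.snd (Set.mem_singleton_iff.mp hm)).symm
      refine ⟨.hole, σ2, l1, r2, Set.mem_diff _ |>.mpr ⟨h2, hne⟩, ?_, ?_⟩
      · show l1 = l1.subst σ2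
        rw [ground_subst g2l]
      · show r2 = r2.subst σ2
        rw [ground_subst g2r]
  · exfalso
    by_cases hrr : (l1, r1) = (l2, r2)
    · injection hrr with e1 e2
      subst e1
      cases D with
      | hole => exact hD rfl
      | cons f L C R' => exact fill_ne_of_cons l1 hfill.symm
    · apply hRed.1 (l1, r1) h1 (D.fill r2)
      refine ⟨D, σ2, l2, r2,
        Set.mem_diff _ |>.mpr ⟨h2, fun hm => hrr (Set.mem_singleton_iff.mp hm).symm⟩, ?_, ?_⟩
      · rw [ground_subst g2l]; exact hfill
      · rw [ground_subst g2r]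
  · exfalso
    by_cases hrr : (l1, r1) = (l2, r2)
    · injection hrr with e1 e2
      subst e1
      cases D with
      | hole => exact hD rfl
      | cons f L C R' => exact fill_ne_of_cons l1 hfill.symm
    · apply hRed.1 (l2, r2) h2 (D.fill r1)
      refine ⟨D, σ1, l1, r1,
        Set.mem_diff _ |>.mpr ⟨h1, fun hm => hrr (Set.mem_singleton_iff.mp hm)⟩, ?_, ?_⟩
      · rw [ground_subst g1l]; exact hfill
      · rw [ground_subst g1r]
  · obtain ⟨D1, D2, hA, hB, hC⟩ := h4 r1 r2
    refine Or.inr ⟨D2.fill r2, ?_, ?_⟩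
    · exact ⟨D2, σ2, l2, r2, h2, by rw [ground_subst g2l]; exact hA, by rw [ground_subst g2r]⟩
    · exact ⟨D1, σ1, l1, r1, h1, by rw [ground_subst g1l]; exact hB,
        by rw [ground_subst g1r]; exact hC⟩

theorem step_app_cases {R : TRS F V} {f : F} {ts : List (Term F V)} {u : Term F V}
    (h : Step R (Term.app f ts) u) :
    (∃ l r σ, (l, r) ∈ R ∧ Term.app f ts = l.subst σ ∧ u = r.subst σ) ∨
    (∃ ts', LStep (Step R) ts ts' ∧ u = Term.app f ts') := by
  obtain ⟨C, σ, l, r, hlr, heq, rfl⟩ := h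
  cases C with
  | hole => exact Or.inl ⟨l, r, σ, hlr, heq, rfl⟩
  | cons f' L C' R' =>
    simp only [Ctx.fill, Term.app.injEq] at heq
    obtain ⟨rfl, rfl⟩ := heq
    exact Or.inr ⟨L ++ C'.fill (r.subst σ) :: R',
      lstep_append ⟨C', σ, l, r, hlr, rfl, rfl⟩ L R', rfl⟩

theorem nf_acc {α : Type _} {r : α → α → Prop} {a : α} (h : NF r a) : Acc (flip r) a :=
  Acc.intro a fun y hy => absurd hy (h y)

theorem acc_app {R : TRS F V} (hG : GroundSys R) (hRed : Reduced R) (f : F) :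
    ∀ ts : List (Term F V), Acc (flip (LStep (Step R))) ts →
      Acc (flip (Step R)) (Term.app f ts) := by
  intro ts hts
  induction hts with
  | intro ts hts ih =>
    constructor
    intro u hu
    rcases step_app_cases hu with ⟨l, r, σ, hlr, _, rfl⟩ | ⟨ts', hl, rfl⟩
    · rw [ground_subst (hG _ hlr).2]
      exact nf_acc (hRed.2 _ hlr)
    · exact ih ts' hl

theorem step_terminating {R : TRS F V} (hG : GroundSys R) (hRed : Reduced R) :
    WellFounded (fun a b : Term F V => Step R b a) := by
  have key : ∀ n (t : Term F V), sizeOf t ≤ n → Acc (flip (Step R)) t := by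
    intro n
    induction n with
    | zero =>
      intro t ht
      cases t <;> simp at ht
    | succ n ih =>
      intro t ht
      cases t with
      | var v =>
        apply nf_acc
        rintro u ⟨C, σ, l, r, hlr, heq, -⟩
        obtain ⟨gl, -⟩ := hG _ hlr
        cases C with
        | hole =>
          cases gl with
          | app => rw [ground_subst (hG _ hlr).1] at heq; simp [Ctx.fill] at heq
        | cons f L C' R' => simp [Ctx.fill] at heq
      | app f ts =>
        apply acc_app hG hRed
        apply acc_list
        intro x hx
        apply ih
        have h1 := List.sizeOf_lt_of_mem hx
        have : sizeOf (Term.app f ts) = 1 + sizeOf f + sizeOf ts := Term.app.sizeOf_spec f ts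
        omega
  exact ⟨fun t => key (sizeOf t) t le_rfl⟩

end Aux

/-- Reduced ground TRSs are canonical and have random descent. -/
theorem reduced_ground_canonical_random_descent {F V : Type} (R : TRS F V)
    (hG : GroundSys R) (hRed : Reduced R) :
    Complete (Step R) ∧ RandomDescent (Step R) := by
  have hdd := step_dd hG hRed
  exact ⟨⟨step_terminating hG hRed, dd_confluent hdd⟩, dd_rd hdd⟩

end KB
end

section
/- Starting from a finite set of ground equations, the inference system of ground completion (orient, delete, compose, simplify, collapse — without deduce) admits no infinite runs. -/
namespace KB

variable {F V : Type}

inductive KBg (gt : Term F V → Term F V → Prop) :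
    Set (Term F V × Term F V) × TRS F V → Set (Term F V × Term F V) × TRS F V → Prop where
  | orientl {E : Set (Term F V × Term F V)} {R : TRS F V} {s t : Term F V} :
      (s, t) ∉ E → gt s t → KBg gt (insert (s, t) E, R) (E, insert (s, t) R)
  | orientr {E : Set (Term F V × Term F V)} {R : TRS F V} {s t : Term F V} :
      (s, t) ∉ E → gt t s → KBg gt (insert (s, t) E, R) (E, insert (t, s) R)
  | delete {E : Set (Term F V × Term F V)} {R : TRS F V} {s : Term F V} :
      (s, s) ∉ E → KBg gt (insert (s, s) E, R) (E, R)
  | compose {E : Set (Term F V × Term F V)} {R : TRS F V} {s t u : Term F V} :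
      (s, t) ∉ R → Step R t u → KBg gt (E, insert (s, t) R) (E, insert (s, u) R)
  | simplifyl {E : Set (Term F V × Term F V)} {R : TRS F V} {s t u : Term F V} :
      (s, t) ∉ E → Step R s u → KBg gt (insert (s, t) E, R) (insert (u, t) E, R)
  | simplifyr {E : Set (Term F V × Term F V)} {R : TRS F V} {s t u : Term F V} :
      (s, t) ∉ E → Step R t u → KBg gt (insert (s, t) E, R) (insert (s, u) E, R)
  | collapse {E : Set (Term F V × Term F V)} {R : TRS F V} {t s u : Term F V} :
      (t, s) ∉ R → Step R t u → KBg gt (E, insert (t, s) R) (insert (u, s) E, R)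

/-! Weigh a state `(E, R)` by the multiset of terms in which both sides of every equation occur
twice, and the left-hand side of every rule twice and its right-hand side once; compare weights in
the multiset extension of the reduction order. Orient and delete drop copies; compose and simplify
replace a side `t` by `u < t` (rules stay oriented, so rewriting goes down); collapse turns
`l → r` into `u ≈ r` with `u, r < l`, trading the two copies of `l` for copies of `u` and `r`.
The multiset extension of a well-founded order is well-founded, so no run is infinite. Sets stay
finite along a run, which keeps the `finsum`s in the weight honest. -/

open Relation

section MultisetOrder

variable {α : Type*} {r : α → α → Prop}

theorem _root_.Relation.reflTransGen_cutExpand_of_le {s t : Multiset α} (h : s ≤ t) :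
    ReflTransGen (CutExpand r) s t := by
  obtain ⟨d, rfl⟩ := Multiset.le_iff_exists_add.1 h
  induction d using Multiset.induction_on with
  | empty => rw [add_zero]
  | cons b d ih =>
    refine ih (Multiset.le_add_right _ _) |>.tail ⟨0, b, nofun, ?_⟩
    rw [Multiset.add_cons, add_zero, add_comm, Multiset.singleton_add]

theorem _root_.Relation.transGen_cutExpand_cons {s t : Multiset α} {b : α}
    (h : ∀ a ∈ s, ∃ c ∈ b ::ₘ t, r a c) : TransGen (CutExpand r) s (b ::ₘ t) := by
  classical
  induction t using Multiset.induction_on generalizing s b with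
  | empty =>
    refine .single (cutExpand_singleton fun a ha => ?_)
    simpa using h a ha
  | cons b' t ih =>
    have hrest : ∀ a ∈ s.filter (¬ r · b), ∃ c ∈ b' ::ₘ t, r a c := by
      intro a ha
      rw [Multiset.mem_filter] at ha
      obtain ⟨c, hc, hac⟩ := h a ha.1
      rcases Multiset.mem_cons.1 hc with rfl | hc
      · exact absurd hac ha.2
      · exact ⟨c, hc, hac⟩
    -- the elements below `b` replace `b`, the others are handled inductively by `b' ::ₘ t`
    rw [← Multiset.filter_add_not (r · b) s, ← Multiset.singleton_add]
    refine .tail' ((ih hrest).to_reflTransGen.lift (_ + ·) fun _ _ =>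
      (cutExpand_add_left _).2) ?_
    exact (cutExpand_add_right _).2 (cutExpand_singleton (s := s.filter (r · b)) fun a ha =>
      (Multiset.mem_filter.1 ha).2)

theorem _root_.Relation.transGen_cutExpand_add_left {s t : Multiset α} (u : Multiset α)
    (h : TransGen (CutExpand r) s t) : TransGen (CutExpand r) (u + s) (u + t) :=
  h.lift (u + ·) fun _ _ => (cutExpand_add_left u).2

theorem _root_.Relation.transGen_cutExpand_of_le_add {m s t u : Multiset α} (hm : m ≤ s + u)
    (h : TransGen (CutExpand r) s t) : TransGen (CutExpand r) m (t + u) :=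
  .trans_right (reflTransGen_cutExpand_of_le hm)
    (h.lift (· + u) fun _ _ => (cutExpand_add_right u).2)

end MultisetOrder

theorem _root_.finsum_mem_insert_le {ι M : Type*} [AddCommMonoid M] [PartialOrder M]
    [CanonicallyOrderedAdd M] (f : ι → M) (a : ι) {s : Set ι} (hs : s.Finite) :
    ∑ᶠ i ∈ insert a s, f i ≤ f a + ∑ᶠ i ∈ s, f i := by
  by_cases ha : a ∈ s
  · rw [Set.insert_eq_of_mem ha]
    exact le_add_self
  · rw [finsum_mem_insert f ha hs]

section Weight

variable {α : Type*} {r : α → α → Prop}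

def eqnWeight (p : α × α) : Multiset α := {p.1, p.1, p.2, p.2}

def ruleWeight (p : α × α) : Multiset α := {p.1, p.1, p.2}

theorem ruleWeight_lt_eqnWeight (p : α × α) :
    TransGen (CutExpand r) (ruleWeight p) (eqnWeight p) :=
  transGen_cutExpand_add_left (s := 0) (ruleWeight p)
    (transGen_cutExpand_cons (t := 0) (by simp))

theorem ruleWeight_swap_lt_eqnWeight (p : α × α) :
    TransGen (CutExpand r) (ruleWeight p.swap) (eqnWeight p) := by
  convert transGen_cutExpand_add_left (ruleWeight p.swap)
    (transGen_cutExpand_cons (r := r) (s := 0) (t := 0) (b := p.1) (by simp)) using 1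
  · rw [add_zero]
  · simp only [eqnWeight, ruleWeight, Prod.fst_swap, Prod.snd_swap, Multiset.insert_eq_cons,
      ← Multiset.singleton_add]
    abel

theorem zero_lt_eqnWeight (p : α × α) : TransGen (CutExpand r) 0 (eqnWeight p) :=
  transGen_cutExpand_cons (s := 0) (b := p.1) (t := {p.1, p.2, p.2}) (by simp)

theorem ruleWeight_lt_ruleWeight {l t u : α} (h : r u t) :
    TransGen (CutExpand r) (ruleWeight (l, u)) (ruleWeight (l, t)) :=
  transGen_cutExpand_add_left {l, l}
    (transGen_cutExpand_cons (s := {u}) (t := 0) (by simpa using h))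

theorem eqnWeight_lt_eqnWeight_left {s t u : α} (h : r u s) :
    TransGen (CutExpand r) (eqnWeight (u, t)) (eqnWeight (s, t)) := by
  convert transGen_cutExpand_add_left {t, t}
    (transGen_cutExpand_cons (r := r) (s := {u, u}) (b := s) (t := {s}) (by simp [h])) using 1 <;>
  · simp only [eqnWeight, Multiset.insert_eq_cons, ← Multiset.singleton_add]
    abel

theorem eqnWeight_lt_eqnWeight_right {s t u : α} (h : r u t) :
    TransGen (CutExpand r) (eqnWeight (s, u)) (eqnWeight (s, t)) :=
  transGen_cutExpand_add_left {s, s}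
    (transGen_cutExpand_cons (s := {u, u}) (t := {t}) (by simp [h]))

theorem eqnWeight_lt_ruleWeight {l t u : α} (hu : r u l) (ht : r t l) :
    TransGen (CutExpand r) (eqnWeight (u, t)) (ruleWeight (l, t)) := by
  convert transGen_cutExpand_add_left {t}
    (transGen_cutExpand_cons (r := r) (s := {u, u, t}) (b := l) (t := {l}) (by simp [hu, ht]))
    using 1 <;>
  · simp only [eqnWeight, ruleWeight, Multiset.insert_eq_cons, ← Multiset.singleton_add]
    abel

variable {E R : Set (α × α)} {q : α × α}

noncomputable def weight (x : Set (α × α) × Set (α × α)) : Multiset α :=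
  (∑ᶠ p ∈ x.1, eqnWeight p) + ∑ᶠ p ∈ x.2, ruleWeight p

theorem weight_insert_eqn (hq : q ∉ E) (hE : E.Finite) :
    weight (insert q E, R) = eqnWeight q + weight (E, R) := by
  rw [weight, weight, finsum_mem_insert _ hq hE, add_assoc]

theorem weight_insert_eqn_le (hE : E.Finite) :
    weight (insert q E, R) ≤ eqnWeight q + weight (E, R) := by
  rw [weight, weight, ← add_assoc]
  exact add_le_add_left (finsum_mem_insert_le eqnWeight q hE) _

theorem weight_insert_rule (hq : q ∉ R) (hR : R.Finite) :
    weight (E, insert q R) = ruleWeight q + weight (E, R) := by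
  rw [weight, weight, finsum_mem_insert _ hq hR, add_left_comm]

theorem weight_insert_rule_le (hR : R.Finite) :
    weight (E, insert q R) ≤ ruleWeight q + weight (E, R) := by
  rw [weight, weight, add_left_comm]
  exact add_le_add_right (finsum_mem_insert_le ruleWeight q hR) _

end Weight

theorem gt_of_step {gt : Term F V → Term F V → Prop} (hgt : ReductionOrder gt) {R : TRS F V}
    (hR : ∀ p ∈ R, gt p.1 p.2) {s t : Term F V} (h : Step R s t) : gt s t := by
  obtain ⟨C, σ, l, r, hlr, rfl, rfl⟩ := h
  exact hgt.2.2.1 C _ _ (hgt.2.2.2 σ l r (hR (l, r) hlr))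

structure FiniteOriented (gt : Term F V → Term F V → Prop)
    (x : Set (Term F V × Term F V) × TRS F V) : Prop where
  finite_eqns : x.1.Finite
  finite_rules : x.2.Finite
  oriented : ∀ p ∈ x.2, gt p.1 p.2

namespace FiniteOriented

variable {gt : Term F V → Term F V → Prop} {x y : Set (Term F V × Term F V) × TRS F V}

theorem of_kbg (hgt : ReductionOrder gt) (h : KBg gt x y) (hx : FiniteOriented gt x) :
    FiniteOriented gt y := by
  obtain ⟨hE, hR, hor⟩ := hx
  cases h with
  | orientl _ hst | orientr _ hst =>
    exact ⟨Set.finite_insert.1 hE, hR.insert _, Set.forall_mem_insert.2 ⟨hst, hor⟩⟩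
  | delete => exact ⟨Set.finite_insert.1 hE, hR, hor⟩
  | compose _ htu =>
    obtain ⟨hst, hor⟩ := Set.forall_mem_insert.1 hor
    exact ⟨hE, (Set.finite_insert.1 hR).insert _,
      Set.forall_mem_insert.2 ⟨hgt.1 hst (gt_of_step hgt hor htu), hor⟩⟩
  | simplifyl | simplifyr => exact ⟨(Set.finite_insert.1 hE).insert _, hR, hor⟩
  | collapse => exact ⟨hE.insert _, Set.finite_insert.1 hR, (Set.forall_mem_insert.1 hor).2⟩

theorem transGen_cutExpand_weight (hgt : ReductionOrder gt) (h : KBg gt x y)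
    (hx : FiniteOriented gt x) : TransGen (CutExpand (flip gt)) (weight y) (weight x) := by
  obtain ⟨hE, hR, hor⟩ := hx
  cases h with
  | orientl hfresh _ =>
    rw [weight_insert_eqn hfresh (Set.finite_insert.1 hE)]
    exact transGen_cutExpand_of_le_add (weight_insert_rule_le hR) (ruleWeight_lt_eqnWeight _)
  | orientr hfresh _ =>
    rw [weight_insert_eqn hfresh (Set.finite_insert.1 hE)]
    exact transGen_cutExpand_of_le_add (weight_insert_rule_le hR)
      (ruleWeight_swap_lt_eqnWeight (_, _))
  | delete hfresh =>
    rw [weight_insert_eqn hfresh (Set.finite_insert.1 hE)]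
    exact transGen_cutExpand_of_le_add (zero_add _).ge (zero_lt_eqnWeight _)
  | compose hfresh htu =>
    have hR := Set.finite_insert.1 hR
    rw [weight_insert_rule hfresh hR]
    exact transGen_cutExpand_of_le_add (weight_insert_rule_le hR)
      (ruleWeight_lt_ruleWeight (gt_of_step hgt (Set.forall_mem_insert.1 hor).2 htu))
  | simplifyl hfresh hsu =>
    have hE := Set.finite_insert.1 hE
    rw [weight_insert_eqn hfresh hE]
    exact transGen_cutExpand_of_le_add (weight_insert_eqn_le hE)
      (eqnWeight_lt_eqnWeight_left (gt_of_step hgt hor hsu))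
  | simplifyr hfresh htu =>
    have hE := Set.finite_insert.1 hE
    rw [weight_insert_eqn hfresh hE]
    exact transGen_cutExpand_of_le_add (weight_insert_eqn_le hE)
      (eqnWeight_lt_eqnWeight_right (gt_of_step hgt hor htu))
  | collapse hfresh htu =>
    obtain ⟨hts, hor⟩ := Set.forall_mem_insert.1 hor
    have hR := Set.finite_insert.1 hR
    rw [weight_insert_rule hfresh hR]
    exact transGen_cutExpand_of_le_add (weight_insert_eqn_le hE)
      (eqnWeight_lt_ruleWeight (gt_of_step hgt hor htu) hts)

end FiniteOriented

theorem ground_completion_terminates_general {F V : Type}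
    (E0 : Set (Term F V × Term F V)) (hfin : E0.Finite)
    (gt : Term F V → Term F V → Prop) (hgt : ReductionOrder gt) :
    ¬ ∃ f : ℕ → Set (Term F V × Term F V) × TRS F V,
      f 0 = (E0, (∅ : TRS F V)) ∧ ∀ i, KBg gt (f i) (f (i + 1)) := by
  rintro ⟨f, hf0, hstep⟩
  have hinv : ∀ i, FiniteOriented gt (f i) := by
    intro i
    induction i with
    | zero => exact hf0 ▸ ⟨hfin, Set.finite_empty, fun _ => False.elim⟩
    | succ i ih => exact ih.of_kbg hgt (hstep i)
  have hwf : WellFounded (TransGen (CutExpand (flip gt))) := hgt.2.1.cutExpand.transGen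
  exact (wellFounded_iff_isEmpty_descending_chain.1 hwf).false
    ⟨fun i => weight (f i), fun i => (hinv i).transGen_cutExpand_weight hgt (hstep i)⟩

/-- Ground completion admits no infinite runs from a finite ground ES. -/
theorem ground_completion_terminates {F V : Type}
    (E0 : Set (Term F V × Term F V)) (hfin : E0.Finite)
    (hg : ∀ p ∈ E0, Ground p.1 ∧ Ground p.2)
    (gt : Term F V → Term F V → Prop) (hgt : ReductionOrder gt) :
    ¬ ∃ f : ℕ → Set (Term F V × Term F V) × TRS F V,
      f 0 = (E0, (∅ : TRS F V)) ∧ ∀ i, KBg gt (f i) (f (i + 1)) :=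
  ground_completion_terminates_general E0 hfin gt hgt

end KB
end
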